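/- arXiv:1912.12182 — 3 statements merged into one kernel-verified Lean document; each statement's English description precedes it below -/
import Mathlib

section
/- (Erdős–Rado theorem) Let κ be an infinite cardinal and let r ≥ 1 be a finite number. Define exp_0(κ) = κ and exp_{m+1}(κ) = 2^{exp_m(κ)}. Let X be a set of cardinality at least (exp_r(κ))⁺ (the cardinal successor of exp_r(κ)), let C be a set of colors of cardinality at most κ, and let f be a function assigning a color in C to every (r+1)-element subset of X. Then there exists a subset H ⊆ X of cardinality κ⁺ that is homogeneous for f, i.e., f is constant on the (r+1)-element subsets of H. -/
/-!
Induction on `r`; for `r = 0` this is the pigeonhole principle for the regular cardinal `κ⁺`.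
For the step let `μ = exp_r κ` and `2 ^ μ < |X|`. The type of `v` over `S ⊆ X` is the map
`s ↦ f (s ∪ {v})` on finite `s ⊆ S`. Since there are at most `2 ^ μ` types over a set of size
`≤ μ`, iterating `μ⁺` times (`μ⁺` is regular) gives `A ⊆ X` of size `≤ 2 ^ μ` that contains, for
every `S ⊆ A` of size `≤ μ`, a point outside `S` of every type over `S` realised outside `S`.
Fix `a ∉ A` and choose recursively `x_i ∈ A`, `i < μ⁺`, of the same type over `{x_j | j < i}`
as `a`. Then `f (s ∪ {x_i}) = f (s ∪ {a})` for `s ⊆ {x_j | j < i}`, so a set homogeneous for the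
colouring `s ↦ f (s ∪ {a})` of the `(r+1)`-subsets of `μ⁺`, which the induction hypothesis
provides, indexes a set homogeneous for `f`.
-/

open Cardinal

universe u

/-- The iterated exponential: `expIter κ 0 = κ` and `expIter κ (m+1) = 2 ^ expIter κ m`. -/
def expIter (κ : Cardinal.{u}) : ℕ → Cardinal.{u}
  | 0 => κ
  | m + 1 => 2 ^ expIter κ m

open Set Function

theorem exists_apply_eq_image_Iio {ι α : Type*} [Preorder ι] [WellFoundedLT ι]
    (next : Set α → α) : ∃ Φ : ι → α, ∀ i, Φ i = next (Φ '' Iio i) := by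
  refine ⟨WellFoundedLT.fix fun i Φ ↦ next (range fun j : Iio i ↦ Φ j j.2), fun i ↦ ?_⟩
  rw [WellFoundedLT.fix_eq, image_eq_range]

theorem exists_injective_forall_image_Iio {ι X : Type u} [LinearOrder ι] [WellFoundedLT ι]
    {μ : Cardinal.{u}} (hι : ∀ i : ι, #(Iio i) ≤ μ) {A : Set X} {P : Set X → X → Prop}
    (hP : ∀ S ⊆ A, #S ≤ μ → ∃ v ∈ A, v ∉ S ∧ P S v) :
    ∃ Φ : ι → X, Injective Φ ∧ ∀ i, P (Φ '' Iio i) (Φ i) := by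
  obtain ⟨v, -⟩ := hP ∅ (empty_subset A) (by simp)
  have : Nonempty X := ⟨v⟩
  choose! next hnext using hP
  obtain ⟨Φ, hΦ⟩ := exists_apply_eq_image_Iio (ι := ι) next
  have key : ∀ i, Φ i ∈ A ∧ Φ i ∉ Φ '' Iio i ∧ P (Φ '' Iio i) (Φ i) := by
    intro i
    induction i using WellFoundedLT.induction with
    | _ i ih =>
      rw [hΦ i]
      exact hnext _ (image_subset_iff.2 fun j hj ↦ (ih j hj).1) (mk_image_le.trans (hι i))
  refine ⟨Φ, Injective.of_lt_imp_ne fun i j hij ↦ ?_, fun i ↦ (key i).2.2⟩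
  exact fun h ↦ (key j).2.1 ⟨i, hij, h⟩

theorem power_le_two_power {μ ν θ : Cardinal} (hμ : ℵ₀ ≤ μ) (hν : ν ≤ 2 ^ μ) (hθ : θ ≤ μ) :
    ν ^ θ ≤ 2 ^ μ :=
  calc ν ^ θ ≤ (2 ^ μ) ^ θ := power_le_power_right hν
    _ ≤ (2 ^ μ) ^ μ := power_le_power_left (power_ne_zero _ two_ne_zero) hθ
    _ = 2 ^ μ := by rw [← power_mul, mul_eq_self hμ]

theorem mk_finset_le_of_le {α : Type u} {μ : Cardinal.{u}} (hμ : ℵ₀ ≤ μ) (h : #α ≤ μ) :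
    #(Finset α) ≤ μ := by
  classical
  exact (mk_le_of_surjective List.toFinset_surjective).trans <|
    (mk_list_le_max α).trans (max_le hμ h)

theorem mk_iUnion_le_of_forall_le {ι α : Type u} {ν : Cardinal.{u}} (hν : ℵ₀ ≤ ν)
    (f : ι → Set α) (hι : #ι ≤ ν) (hf : ∀ i, #(f i) ≤ ν) : #(⋃ i, f i) ≤ ν :=
  (mk_iUnion_le f).trans (mul_le_of_le hν hι (ciSup_le' hf))

theorem exists_forall_lt_of_mk_le {μ : Cardinal.{u}} (hμ : ℵ₀ ≤ μ)
    (T : Set (Order.succ μ).ord.ToType) (hT : #T ≤ μ) : ∃ i, ∀ j ∈ T, j < i := by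
  refine not_isCofinal_iff.1 fun hcof ↦ (Order.cof_le hcof).not_gt ?_
  rw [Ordinal.cof_toType, (isRegular_succ hμ).cof_ord]
  exact hT.trans_lt (Order.lt_succ μ)

theorem mk_Iio_ord_succ_le {μ : Cardinal.{u}} (i : (Order.succ μ).ord.ToType) : #(Iio i) ≤ μ :=
  Order.lt_succ_iff.1 <| by simpa using mk_Iio_lt i (by simp)

theorem exists_closure_mk_le_two_power {X : Type u} {μ : Cardinal.{u}} (hμ : ℵ₀ ≤ μ)
    (R : Set X → Set X) (hR : ∀ S : Set X, #S ≤ μ → #(R S) ≤ 2 ^ μ) :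
    ∃ A : Set X, #A ≤ 2 ^ μ ∧ ∀ S ⊆ A, #S ≤ μ → R S ⊆ A := by
  have h2μ : ℵ₀ ≤ 2 ^ μ := hμ.trans (cantor μ).le
  obtain ⟨F, hF⟩ := exists_apply_eq_image_Iio (ι := (Order.succ μ).ord.ToType)
    fun 𝒮 : Set (Set X) ↦ ⋃ S : {S // S ⊆ ⋃₀ 𝒮 ∧ #S ≤ μ}, R S
  have hmkF : ∀ i, #(F i) ≤ 2 ^ μ := by
    intro i
    induction i using WellFoundedLT.induction with
    | _ i ih =>
      rw [hF i]
      have hU : #(⋃₀ (F '' Iio i)) ≤ 2 ^ μ := by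
        rw [sUnion_image, biUnion_eq_iUnion]
        refine mk_iUnion_le_of_forall_le h2μ _ ?_ fun j ↦ ih j j.2
        exact (mk_Iio_ord_succ_le i).trans (cantor μ).le
      refine mk_iUnion_le_of_forall_le h2μ _ ?_ fun S ↦ hR S S.2.2
      exact (mk_bounded_subset_le _ μ).trans (power_le_two_power hμ (max_le hU h2μ) le_rfl)
  refine ⟨⋃ i, F i, mk_iUnion_le_of_forall_le h2μ F ?_ hmkF, fun S hSA hS ↦ ?_⟩
  · simpa using Order.succ_le_of_lt (cantor μ)
  have hstage : ∀ x : S, ∃ i, (x : X) ∈ F i := fun x ↦ mem_iUnion.1 (hSA x.2)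
  choose g hg using hstage
  obtain ⟨i, hi⟩ := exists_forall_lt_of_mk_le hμ (range g) (mk_range_le.trans hS)
  have hSi : S ⊆ ⋃₀ (F '' Iio i) := fun x hx ↦
    ⟨F (g ⟨x, hx⟩), mem_image_of_mem F (hi _ (mem_range_self _)), hg ⟨x, hx⟩⟩
  have hRSi : R S ⊆ F i := by
    rw [hF i]
    exact subset_iUnion_of_subset ⟨S, hSi, hS⟩ subset_rfl
  exact hRSi.trans (subset_iUnion F i)

def IsHomogeneous {X C : Type*} (f : Finset X → C) (n : ℕ) (H : Set X) : Prop :=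
  ∀ s t : Finset X, ↑s ⊆ H → ↑t ⊆ H → s.card = n → t.card = n → f s = f t

section Homogeneous

variable {X ι C : Type*} {f : Finset X → C} {n : ℕ}

theorem IsHomogeneous.mono {H H' : Set X} (h : IsHomogeneous f n H) (hH : H' ⊆ H) :
    IsHomogeneous f n H' :=
  fun s t hs ht ↦ h s t (hs.trans hH) (ht.trans hH)

theorem IsHomogeneous.image [DecidableEq X] {Φ : ι → X} (hΦ : Injective Φ) {H : Set ι}
    (h : IsHomogeneous (fun s ↦ f (s.image Φ)) n H) : IsHomogeneous f n (Φ '' H) := by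
  intro s t hs ht hsn htn
  obtain ⟨s', hs'H, rfl⟩ := Finset.subset_set_image_iff.1 hs
  obtain ⟨t', ht'H, rfl⟩ := Finset.subset_set_image_iff.1 ht
  rw [Finset.card_image_of_injective _ hΦ] at hsn htn
  exact h s' t' hs'H ht'H hsn htn

theorem IsHomogeneous.of_insert_of_forall_lt [LinearOrder ι] [DecidableEq ι]
    {g h : Finset ι → C} {H : Set ι} (hg : IsHomogeneous g n H)
    (hh : ∀ i s, (∀ j ∈ s, j < i) → h (insert i s) = g s) : IsHomogeneous h (n + 1) H := by
  have hdrop : ∀ s : Finset ι, ↑s ⊆ H → s.card = n + 1 → ∃ u : Finset ι, ↑u ⊆ H ∧ u.card = n ∧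
      h s = g u := by
    intro s hs hsn
    have hne : s.Nonempty := Finset.card_pos.1 (by omega)
    have hmax := s.max'_mem hne
    refine ⟨s.erase (s.max' hne), (Finset.coe_subset.2 (s.erase_subset _)).trans hs,
      by rw [Finset.card_erase_of_mem hmax, hsn, Nat.add_sub_cancel], ?_⟩
    conv_lhs => rw [← Finset.insert_erase hmax]
    exact hh _ _ fun j hj ↦ s.lt_max'_of_mem_erase_max' hne hj
  intro s t hs ht hsn htn
  obtain ⟨u, huH, hun, hu⟩ := hdrop s hs hsn
  obtain ⟨v, hvH, hvn, hv⟩ := hdrop t ht htn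
  rw [hu, hv]
  exact hg u v huH hvH hun hvn

end Homogeneous

section Types

variable {X C : Type u} [DecidableEq X] (f : Finset X → C)

def typeOver (S : Set X) (v : X) : Finset S → C :=
  fun s ↦ f (insert v (s.map (Embedding.subtype (· ∈ S))))

variable {f}

theorem typeOver_eq_typeOver_iff {S : Set X} {v a : X} :
    typeOver f S v = typeOver f S a ↔ ∀ s : Finset X, ↑s ⊆ S → f (insert v s) = f (insert a s) := by
  classical
  constructor
  · intro h s hs
    simpa [typeOver, Finset.subtype_map_of_mem hs] using congr_fun h (s.subtype (· ∈ S))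
  · intro h
    funext s
    exact h _ (by simp)

variable (f)

theorem exists_set_realizing_typeOver (S : Set X) :
    ∃ R : Set X, #R ≤ #(Finset S → C) ∧
      ∀ a ∉ S, ∃ v ∈ R, v ∉ S ∧ typeOver f S v = typeOver f S a := by
  obtain ⟨R, hRS, hbij⟩ := exists_subset_bijOn Sᶜ (typeOver f S)
  refine ⟨R, ?_, fun a ha ↦ ?_⟩
  · rw [← mk_image_eq_of_injOn _ _ hbij.injOn]
    exact mk_set_le _
  · obtain ⟨v, hv, hva⟩ := hbij.surjOn ⟨a, ha, rfl⟩
    exact ⟨v, hv, hRS hv, hva⟩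

theorem exists_injective_insert_image_eq {μ : Cardinal.{u}} (hμ : ℵ₀ ≤ μ) (hC : #C ≤ 2 ^ μ)
    (hX : 2 ^ μ < #X) :
    ∃ (a : X) (Φ : (Order.succ μ).ord.ToType → X), Injective Φ ∧
      ∀ i (s : Finset _), (∀ j ∈ s, j < i) →
        f (insert (Φ i) (s.image Φ)) = f (insert a (s.image Φ)) := by
  choose R hRmk hR using exists_set_realizing_typeOver f
  obtain ⟨A, hA, hAR⟩ := exists_closure_mk_le_two_power hμ R fun S hS ↦ (hRmk S).trans <| by
    rw [← power_def]
    exact power_le_two_power hμ hC (mk_finset_le_of_le hμ hS)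
  obtain ⟨a, ha⟩ : ∃ a, a ∉ A := by
    by_contra! hA'
    rw [eq_univ_of_forall hA', mk_univ] at hA
    exact hA.not_gt hX
  obtain ⟨Φ, hΦ, htype⟩ := exists_injective_forall_image_Iio mk_Iio_ord_succ_le
    (P := fun S v ↦ typeOver f S v = typeOver f S a) fun S hSA hS ↦ by
      obtain ⟨v, hv, hvS, hva⟩ := hR S a fun haS ↦ ha (hSA haS)
      exact ⟨v, hAR S hSA hS hv, hvS, hva⟩
  refine ⟨a, Φ, hΦ, fun i s hs ↦ typeOver_eq_typeOver_iff.1 (htype i) _ ?_⟩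
  rw [Finset.coe_image]
  exact image_mono fun j hj ↦ hs j hj

end Types

theorem le_expIter (κ : Cardinal.{u}) (r : ℕ) : κ ≤ expIter κ r := by
  induction r with
  | zero => exact le_rfl
  | succ r ih => exact ih.trans (cantor _).le

theorem exists_isHomogeneous_of_succ_expIter_le {κ : Cardinal.{u}} (hκ : ℵ₀ ≤ κ) (r : ℕ)
    {X C : Type u} (hX : Order.succ (expIter κ r) ≤ #X) (hC : #C ≤ κ) (f : Finset X → C) :
    ∃ H : Set X, Order.succ κ ≤ #H ∧ IsHomogeneous f (r + 1) H := by
  induction r generalizing X with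
  | zero =>
    have hcof : #C < (Order.succ κ).ord.cof := by
      rw [(isRegular_succ hκ).cof_ord]
      exact hC.trans_lt (Order.lt_succ κ)
    obtain ⟨c, hc⟩ :=
      infinite_pigeonhole_card (fun x ↦ f {x}) _ hX (hκ.trans (Order.le_succ κ)) hcof
    refine ⟨_, hc, fun s t hs ht hsn htn ↦ ?_⟩
    obtain ⟨x, rfl⟩ := Finset.card_eq_one.1 hsn
    obtain ⟨y, rfl⟩ := Finset.card_eq_one.1 htn
    exact (hs (by simp) : f {x} = c).trans (ht (by simp) : f {y} = c).symm
  | succ r ih =>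
    classical
    have hμ : ℵ₀ ≤ expIter κ r := hκ.trans (le_expIter κ r)
    obtain ⟨a, Φ, hΦ, hend⟩ := exists_injective_insert_image_eq f hμ
      (hC.trans ((le_expIter κ r).trans (cantor _).le)) (Order.succ_le_iff.1 hX)
    obtain ⟨H, hH, hhom⟩ := ih (by rw [mk_ord_toType]) fun s ↦ f (insert a (s.image Φ))
    refine ⟨Φ '' H, by rwa [mk_image_eq hΦ], (hhom.of_insert_of_forall_lt fun i s hs ↦ ?_).image hΦ⟩
    rw [Finset.image_insert]
    exact hend i s hs

theorem stmt_8_general {κ : Cardinal.{u}} (hκ : ℵ₀ ≤ κ) (r : ℕ)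
    {X C : Type u} (hX : Order.succ (expIter κ r) ≤ #X) (hC : #C ≤ κ)
    (f : Finset X → C) :
    ∃ H : Set X, #H = Order.succ κ ∧
      ∀ s t : Finset X, ↑s ⊆ H → ↑t ⊆ H → s.card = r + 1 → t.card = r + 1 →
        f s = f t := by
  obtain ⟨H, hH, hhom⟩ := exists_isHomogeneous_of_succ_expIter_le hκ r hX hC f
  obtain ⟨H', hH'H, hH'⟩ := le_mk_iff_exists_subset.1 hH
  exact ⟨H', hH', hhom.mono hH'H⟩

/-- Erdős–Rado: Let `κ` be an infinite cardinal and `r ≥ 1` finite. If `X`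
has cardinality at least `(exp_r κ)⁺`, `C` has cardinality at most `κ`, and `f` colours
the `(r+1)`-element subsets of `X` by colours in `C`, then there is `H ⊆ X` of
cardinality `κ⁺` homogeneous for `f`: `f` is constant on `(r+1)`-element subsets of `H`. -/
theorem stmt_8 {κ : Cardinal.{u}} (hκ : ℵ₀ ≤ κ) (r : ℕ) (hr : 1 ≤ r)
    {X C : Type u} (hX : Order.succ (expIter κ r) ≤ #X) (hC : #C ≤ κ)
    (f : Finset X → C) :
    ∃ H : Set X, #H = Order.succ κ ∧
      ∀ s t : Finset X, ↑s ⊆ H → ↑t ⊆ H → s.card = r + 1 → t.card = r + 1 →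
        f s = f t :=
  stmt_8_general hκ r hX hC f
end

section
/- (Erdős–Rado theorem for pairs) Let κ be an infinite cardinal, let X be a set of cardinality at least (2^κ)⁺, let C be a set of colors of cardinality at most κ, and let f be a function assigning a color in C to every 2-element subset of X. Then there exists a subset H ⊆ X of cardinality κ⁺ such that f is constant on the 2-element subsets of H. -/
/-!
Choose `A ⊆ X` with `#A ≤ 2 ^ κ` such that for every `B ⊆ A` with `#B ≤ κ`, every colour pattern
`b ↦ c b x` over `B` realised by some `x ∉ B` is already realised in `A \ B`. There are only
`(2 ^ κ) ^ κ = 2 ^ κ` such pairs `(B, pattern)`, so `A` is the union of a tower of length `κ⁺` of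
sets of size at most `2 ^ κ`, and regularity of `κ⁺` puts each small `B ⊆ A` inside one stage.
Since `#X > 2 ^ κ`, some `x` lies outside `A`; realising its pattern over the earlier terms again
and again gives a `κ⁺`-sequence `a` in `A` with `c (a j) (a i) = c (a j) x` for `j < i`. By the
pigeonhole principle `κ⁺` many `i` share the colour `c (a i) x`, and their points are homogeneous.
-/

open Cardinal Set

universe u

theorem exists_seq_of_forall_Iio_exists {I α : Type*} [LinearOrder I] [WellFoundedLT I]
    (P : α → Prop) (r : α → α → Prop)
    (h : ∀ i : I, ∀ v : Iio i → α, (∀ j, P (v j)) → ∃ y, P y ∧ ∀ j, r (v j) y) :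
    ∃ f : I → α, (∀ i, P (f i)) ∧ ∀ j i, j < i → r (f j) (f i) := by
  choose next hnextP hnextr using fun i (v : Iio i → Subtype P) =>
    h i (fun j => v j) fun j => (v j).2
  let f : I → Subtype P := wellFounded_lt.fix fun i rec => ⟨next i fun j => rec j j.2, hnextP i _⟩
  have hf : ∀ i, f i = ⟨next i fun j => f j, hnextP i _⟩ := wellFounded_lt.fix_eq _
  refine ⟨fun i => f i, fun i => (f i).2, fun j i hji => ?_⟩
  show r (f j : α) (f i)
  rw [hf i]
  exact hnextr i (fun j => f j) ⟨j, hji⟩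

section SmallClosure

variable {X : Type u} {κ μ : Cardinal.{u}}

def smallClosureStep (κ : Cardinal.{u}) (G : Set X → Set X) (S : Set X) : Set X :=
  S ∪ ⋃ B : {B : Set X // B ⊆ S ∧ #B ≤ κ}, G B

theorem mk_smallClosureStep_le (hκ : ℵ₀ ≤ κ) (hκμ : κ < μ) (hμ : μ ^ κ ≤ μ)
    {G : Set X → Set X} (hG : ∀ B : Set X, #B ≤ κ → #(G B) ≤ μ) {S : Set X} (hS : #S ≤ μ) :
    #(smallClosureStep κ G S) ≤ μ := by
  have hμ₀ : ℵ₀ ≤ μ := hκ.trans hκμ.le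
  have hsubsets : #{B : Set X // B ⊆ S ∧ #B ≤ κ} ≤ μ :=
    (mk_bounded_subset_le S κ).trans <| (power_le_power_right (max_le hS hμ₀)).trans hμ
  refine (mk_union_le _ _).trans <| add_le_of_le hμ₀ hS <| (mk_iUnion_le _).trans ?_
  exact mul_le_of_le hμ₀ hsubsets <| ciSup_le' fun B => hG B B.2.2

variable (I : Type u) [LinearOrder I] [WellFoundedLT I]

def smallClosureTower (κ : Cardinal.{u}) (G : Set X → Set X) : I → Set X :=
  wellFounded_lt.fix fun i T => smallClosureStep κ G (⋃ j : Iio i, T j j.2)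

variable {I}

theorem smallClosureTower_eq (G : Set X → Set X) (i : I) :
    smallClosureTower I κ G i = smallClosureStep κ G (⋃ j : Iio i, smallClosureTower I κ G j) :=
  wellFounded_lt.fix_eq _ i

theorem mk_smallClosureTower_le (hκ : ℵ₀ ≤ κ) (hκμ : κ < μ) (hμ : μ ^ κ ≤ μ) (hI : #I ≤ μ)
    {G : Set X → Set X} (hG : ∀ B : Set X, #B ≤ κ → #(G B) ≤ μ) (i : I) :
    #(smallClosureTower I κ G i) ≤ μ := by
  induction i using WellFoundedLT.induction with
  | _ i ih =>
    rw [smallClosureTower_eq]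
    refine mk_smallClosureStep_le hκ hκμ hμ hG <| (mk_iUnion_le _).trans ?_
    exact mul_le_of_le (hκ.trans hκμ.le) ((mk_set_le _).trans hI) (ciSup_le' fun j => ih j j.2)

theorem subset_iUnion_smallClosureTower (hI : κ < Order.cof I)
    (G : Set X → Set X) {B : Set X} (hBT : B ⊆ ⋃ i, smallClosureTower I κ G i) (hB : #B ≤ κ) :
    G B ⊆ ⋃ i, smallClosureTower I κ G i := by
  choose stage hstage using fun b : B => mem_iUnion.mp (hBT b.2)
  have hbdd : ¬IsCofinal (range stage) := fun hcof =>
    ((Order.cof_le hcof).trans (mk_range_le.trans hB)).not_gt hI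
  obtain ⟨i, hi⟩ := not_isCofinal_iff.mp hbdd
  have hBi : B ⊆ ⋃ j : Iio i, smallClosureTower I κ G j := fun b hb =>
    mem_iUnion.mpr ⟨⟨stage ⟨b, hb⟩, hi _ (mem_range_self _)⟩, hstage ⟨b, hb⟩⟩
  refine subset_trans ?_ (subset_iUnion _ i)
  rw [smallClosureTower_eq]
  exact subset_union_of_subset_right
    (subset_iUnion (fun B' : {B' : Set X // B' ⊆ _ ∧ #B' ≤ κ} => G B') ⟨B, hBi, hB⟩) _

theorem exists_mk_le_closed_under_small (hκ : ℵ₀ ≤ κ) (hκμ : κ < μ) (hμ : μ ^ κ ≤ μ)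
    (G : Set X → Set X) (hG : ∀ B : Set X, #B ≤ κ → #(G B) ≤ μ) :
    ∃ A : Set X, #A ≤ μ ∧ ∀ B ⊆ A, #B ≤ κ → G B ⊆ A := by
  let I := (Order.succ κ).ord.ToType
  have hI : #I = Order.succ κ := mk_ord_toType _
  have hIcof : Order.cof I = Order.succ κ := by
    rw [Ordinal.cof_toType, (isRegular_succ hκ).cof_ord]
  refine ⟨⋃ i : I, smallClosureTower I κ G i, ?_, fun B hBT hB =>
    subset_iUnion_smallClosureTower (hIcof.symm ▸ Order.lt_succ κ) G hBT hB⟩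
  have hIμ : #I ≤ μ := hI ▸ Order.succ_le_of_lt hκμ
  exact (mk_iUnion_le _).trans <| mul_le_of_le (hκ.trans hκμ.le) hIμ <|
    ciSup_le' <| mk_smallClosureTower_le hκ hκμ hμ hIμ hG

end SmallClosure

section ErdosRado

variable {X C : Type u} {κ : Cardinal.{u}}

theorem exists_mk_le_realizing_color_types {μ : Cardinal.{u}} (hκ : ℵ₀ ≤ κ) (hκμ : κ < μ)
    (hμ : μ ^ κ ≤ μ) (hC : #C ≤ μ) (c : X → X → C) :
    ∃ A : Set X, #A ≤ μ ∧
      ∀ B ⊆ A, #B ≤ κ → ∀ x ∉ B, ∃ y ∈ A, y ∉ B ∧ ∀ b ∈ B, c b y = c b x := by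
  let G : Set X → Set X := fun B =>
    range fun t : {t : B → C // ∃ y ∉ B, ∀ b : B, c b y = t b} => t.2.choose
  have hG : ∀ B : Set X, #B ≤ κ → #(G B) ≤ μ := fun B hB => calc
    #(G B) ≤ #(B → C) := mk_range_le.trans (mk_subtype_le _)
    _ = #C ^ #B := by rw [mk_arrow, lift_id, lift_id]
    _ ≤ μ ^ κ := (power_le_power_right hC).trans (power_le_power_left hκμ.ne_bot hB)
    _ ≤ μ := hμ
  obtain ⟨A, hAμ, hA⟩ := exists_mk_le_closed_under_small hκ hκμ hμ G hG
  refine ⟨A, hAμ, fun B hBA hB x hx => ?_⟩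
  have hrealized : ∃ y ∉ B, ∀ b : B, c b y = c b x := ⟨x, hx, fun _ => rfl⟩
  obtain ⟨hyB, hy⟩ := hrealized.choose_spec
  exact ⟨_, hA B hBA hB ⟨⟨_, hrealized⟩, rfl⟩, hyB, fun b hb => hy ⟨b, hb⟩⟩

theorem exists_seq_color_eq_color (hκ : ℵ₀ ≤ κ) (hX : Order.succ (2 ^ κ) ≤ #X) (hC : #C ≤ κ)
    (c : X → X → C) :
    ∃ (x : X) (a : (Order.succ κ).ord.ToType → X),
      ∀ j i, j < i → a j ≠ a i ∧ c (a j) (a i) = c (a j) x := by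
  have hκ2 : ((2 : Cardinal) ^ κ) ^ κ ≤ 2 ^ κ := by rw [← power_mul, mul_eq_self hκ]
  obtain ⟨A, hAμ, hA⟩ := exists_mk_le_realizing_color_types hκ (cantor κ) hκ2
    (hC.trans (cantor κ).le) c
  obtain ⟨x, hxA⟩ := compl_nonempty_of_mk_lt_mk (hAμ.trans_lt (Order.succ_le_iff.mp hX))
  have hstep : ∀ (i : (Order.succ κ).ord.ToType) (v : Iio i → X), (∀ j, v j ∈ A) →
      ∃ y ∈ A, ∀ j, v j ≠ y ∧ c (v j) y = c (v j) x := by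
    intro i v hv
    have hIio : #(Iio i) < Order.succ κ := by
      simpa using mk_Iio_lt i (by rw [mk_ord_toType, Ordinal.type_toType])
    obtain ⟨y, hyA, hyv, hy⟩ := hA _ (range_subset_iff.mpr hv)
      (mk_range_le.trans (Order.lt_succ_iff.mp hIio)) x fun ⟨j, hj⟩ => hxA (hj ▸ hv j)
    exact ⟨y, hyA, fun j => ⟨fun h => hyv ⟨j, h⟩, hy _ ⟨j, rfl⟩⟩⟩
  obtain ⟨a, -, ha⟩ :=
    exists_seq_of_forall_Iio_exists (· ∈ A) (fun b y => b ≠ y ∧ c b y = c b x) hstep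
  exact ⟨x, a, ha⟩

theorem erdos_rado (hκ : ℵ₀ ≤ κ) (hX : Order.succ (2 ^ κ) ≤ #X) (hC : #C ≤ κ)
    (c : X → X → C) (hc : ∀ x y, c x y = c y x) :
    ∃ H : Set X, #H = Order.succ κ ∧ ∃ c₀, H.Pairwise fun x y => c x y = c₀ := by
  obtain ⟨x, a, ha⟩ := exists_seq_color_eq_color hκ hX hC c
  have hI : #(Order.succ κ).ord.ToType = Order.succ κ := mk_ord_toType _
  obtain ⟨c₀, hc₀⟩ := infinite_pigeonhole (fun i => c (a i) x)
    (hI.symm ▸ hκ.trans (Order.le_succ κ))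
    (by rw [hI, (isRegular_succ hκ).cof_ord]; exact hC.trans_lt (Order.lt_succ κ))
  have ha_inj : Function.Injective a := .of_lt_imp_ne fun j i hji => (ha j i hji).1
  refine ⟨a '' ((fun i => c (a i) x) ⁻¹' {c₀}), ?_, c₀, ?_⟩
  · rw [mk_image_eq_of_injOn _ _ ha_inj.injOn, hc₀, hI]
  · rintro _ ⟨i, hi, rfl⟩ _ ⟨j, hj, rfl⟩ hij
    rcases lt_or_gt_of_ne (ne_of_apply_ne a hij) with hlt | hlt
    · exact (ha i j hlt).2.trans hi
    · exact (hc _ _).trans ((ha j i hlt).2.trans hj)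

end ErdosRado

/-- Erdős–Rado for pairs: Let `κ` be an infinite cardinal. If `X` has
cardinality at least `(2^κ)⁺`, `C` has cardinality at most `κ`, and `f` colours the
2-element subsets of `X` by colours in `C`, then there is `H ⊆ X` of cardinality `κ⁺`
such that `f` is constant on the 2-element subsets of `H`. -/
theorem stmt_9 {κ : Cardinal.{u}} (hκ : ℵ₀ ≤ κ)
    {X C : Type u} [DecidableEq X] (hX : Order.succ (2 ^ κ) ≤ #X) (hC : #C ≤ κ)
    (f : Finset X → C) :
    ∃ H : Set X, #H = Order.succ κ ∧
      ∀ x ∈ H, ∀ y ∈ H, x ≠ y → ∀ x' ∈ H, ∀ y' ∈ H, x' ≠ y' →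
        f {x, y} = f {x', y'} := by
  obtain ⟨H, hH, c₀, hc₀⟩ :=
    erdos_rado hκ hX hC (fun x y => f {x, y}) fun x y => by rw [Finset.pair_comm]
  exact ⟨H, hH, fun x hx y hy hxy x' hx' y' hy' hxy' =>
    (hc₀ hx hy hxy).trans (hc₀ hx' hy' hxy').symm⟩
end

section
/- Let κ be an infinite cardinal, let X be a set of cardinality at least (2^κ)⁺, let C be a set of colors of cardinality at most κ, and let f be a function assigning a color in C to every 2-element subset of X. Then there exist three distinct points z₁, z₂, z₃ ∈ X forming a monochromatic triangle: f({z₁,z₂}) = f({z₂,z₃}) = f({z₁,z₃}). -/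
open Cardinal Ordinal Set

universe u

namespace Stmt10Aux

noncomputable section

variable {X C : Type u} [DecidableEq X]

/-- index type of size κ -/
abbrev K (κ : Cardinal.{u}) : Type u := κ.ord.ToType

/-- index type of size κ⁺ -/
abbrev I (κ : Cardinal.{u}) : Type u := (Order.succ κ).ord.ToType

/-- A "type": a κ-indexed partial list of points with prescribed colours. -/
def T (κ : Cardinal.{u}) (X C : Type u) : Type u := (K κ → Option X) × (K κ → C)

/-- `y` realizes the type `p`. -/
def Realized (f : Finset X → C) {κ : Cardinal.{u}} (p : T κ X C) (y : X) : Prop :=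
  ∀ k b, p.1 k = some b → y ≠ b ∧ f {b, y} = p.2 k

variable (f : Finset X → C) (κ : Cardinal.{u})

open scoped Classical in
/-- a choice of realizer -/
def rr [Nonempty X] (p : T κ X C) : X :=
  if h : ∃ y, Realized f p y then h.choose else Classical.arbitrary X

theorem rr_realized [Nonempty X] {p : T κ X C} (h : ∃ y, Realized f p y) :
    Realized f p (rr f κ p) := by
  rw [rr, dif_pos h]; exact h.choose_spec

/-- the types all of whose points lie in `S` -/
def Q (S : Set X) : Set (T κ X C) := {p | ∀ k b, p.1 k = some b → b ∈ S}

/-- one closure step -/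
def extS [Nonempty X] (S : Set X) : Set X := S ∪ rr f κ '' Q κ S

/-- the cumulative hierarchy of the hull -/
def H [Nonempty X] : I κ → Set X :=
  WellFoundedLT.fix fun i ih => extS f κ (⋃ j : Iio i, ih j j.2)

theorem H_eq [Nonempty X] (i : I κ) :
    H f κ i = extS f κ (⋃ j : Iio i, H f κ j) :=
  WellFoundedLT.fix_eq _ i

/-- the hull -/
def A [Nonempty X] : Set X := ⋃ i, H f κ i

theorem card_K : #(K κ) = κ := mk_ord_toType κ

theorem card_I : #(I κ) = Order.succ κ := mk_ord_toType (Order.succ κ)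

theorem card_Iio (i : I κ) : #(Iio i) ≤ κ :=
  Order.lt_succ_iff.1 (Cardinal.mk_Iio_ord_toType i)

theorem aleph0_le_two_power (hκ : ℵ₀ ≤ κ) : ℵ₀ ≤ 2 ^ κ :=
  hκ.trans (cantor κ).le

theorem two_power_power (hκ : ℵ₀ ≤ κ) : ((2 : Cardinal.{u}) ^ κ) ^ κ = 2 ^ κ := by
  rw [← power_mul, mul_eq_self hκ]

theorem card_Q (hκ : ℵ₀ ≤ κ) (hC : #C ≤ κ) {S : Set X} (hS : #S ≤ 2 ^ κ) :
    #(Q κ (C := C) S) ≤ 2 ^ κ := by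
  have hsurj : Function.Surjective
      (fun gt : (K κ → Option S) × (K κ → C) =>
        (⟨(fun k => (gt.1 k).map Subtype.val, gt.2), by
          rintro k b hb
          obtain ⟨b', _, rfl⟩ := Option.map_eq_some_iff.1 hb
          exact b'.2⟩ : Q κ (C := C) S)) := by
    rintro ⟨⟨g, t⟩, hp⟩
    refine ⟨⟨fun k => (g k).pmap (fun b hb => (⟨b, hb⟩ : S)) (hp k), t⟩, ?_⟩
    apply Subtype.ext
    refine Prod.ext (funext fun k => ?_) rfl
    rcases hg : g k with _ | b <;> simp [hg]
  have h1 : #((K κ → Option S) × (K κ → C)) ≤ 2 ^ κ := by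
    have hOS : #(Option S) ≤ 2 ^ κ := by
      rw [mk_option]
      calc #S + 1 ≤ 2 ^ κ + 2 ^ κ :=
            add_le_add hS (one_le_aleph0.trans (aleph0_le_two_power κ hκ))
        _ = 2 ^ κ := add_eq_self (aleph0_le_two_power κ hκ)
    have hA : #(K κ → Option S) ≤ 2 ^ κ := by
      rw [← power_def, card_K]
      calc #(Option S) ^ κ ≤ (2 ^ κ) ^ κ := power_le_power_right hOS
        _ = 2 ^ κ := two_power_power κ hκ
    have hB : #(K κ → C) ≤ 2 ^ κ := by
      rw [← power_def, card_K]
      calc #C ^ κ ≤ κ ^ κ := power_le_power_right hC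
        _ = 2 ^ κ := power_self_eq hκ
    calc #((K κ → Option S) × (K κ → C)) = #(K κ → Option S) * #(K κ → C) := by
          rw [mk_prod, Cardinal.lift_id, Cardinal.lift_id]
      _ ≤ 2 ^ κ * 2 ^ κ := mul_le_mul' hA hB
      _ = 2 ^ κ := mul_eq_self (aleph0_le_two_power κ hκ)
  exact (mk_le_of_surjective hsurj).trans h1

theorem card_extS [Nonempty X] (hκ : ℵ₀ ≤ κ) (hC : #C ≤ κ) {S : Set X} (hS : #S ≤ 2 ^ κ) :
    #(extS f κ S) ≤ 2 ^ κ := by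
  calc #(extS f κ S) ≤ #S + #(rr f κ '' Q κ S) := mk_union_le _ _
    _ ≤ 2 ^ κ + 2 ^ κ := add_le_add hS ((mk_image_le).trans (card_Q κ hκ hC hS))
    _ = 2 ^ κ := add_eq_self (aleph0_le_two_power κ hκ)

theorem card_H [Nonempty X] (hκ : ℵ₀ ≤ κ) (hC : #C ≤ κ) :
    ∀ i, #(H f κ i) ≤ 2 ^ κ := by
  intro i
  induction i using WellFoundedLT.induction with
  | _ i IH =>
    rw [H_eq]
    refine card_extS f κ hκ hC ?_
    calc #(⋃ j : Iio i, H f κ j) ≤ sum fun j : Iio i => #(H f κ j) := mk_iUnion_le_sum_mk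
      _ ≤ sum fun _ : Iio i => 2 ^ κ := sum_le_sum _ _ fun j => IH j j.2
      _ = #(Iio i) * 2 ^ κ := sum_const' _ _
      _ ≤ (2 ^ κ) * 2 ^ κ :=
          mul_le_mul_left ((card_Iio κ i).trans (cantor κ).le) _
      _ = 2 ^ κ := mul_eq_self (aleph0_le_two_power κ hκ)

theorem card_A [Nonempty X] (hκ : ℵ₀ ≤ κ) (hC : #C ≤ κ) : #(A f κ) ≤ 2 ^ κ := by
  calc #(A f κ) ≤ sum fun i : I κ => #(H f κ i) := mk_iUnion_le_sum_mk
    _ ≤ sum fun _ : I κ => 2 ^ κ := sum_le_sum _ _ fun i => card_H f κ hκ hC i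
    _ = #(I κ) * 2 ^ κ := sum_const' _ _
    _ ≤ (2 ^ κ) * 2 ^ κ := by
        rw [card_I]
        exact mul_le_mul_left (Order.succ_le_of_lt (cantor κ)) _
    _ = 2 ^ κ := mul_eq_self (aleph0_le_two_power κ hκ)

theorem exists_bound (hκ : ℵ₀ ≤ κ) {β : Type u} (hβ : #β ≤ κ) (g : β → I κ) :
    ∃ i : I κ, ∀ b, g b < i := by
  let ty : I κ → Ordinal.{u} := fun i => @typein (I κ) (· < ·) isWellOrder_lt i
  let F : β → Ordinal.{u} := fun b => ty (g b) + 1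
  have hty : ∀ b, (ty (g b)).card ≤ κ :=
    fun b => Order.lt_succ_iff.1 (Cardinal.card_typein_toType_lt (Order.succ κ) (g b))
  have hFlt : ∀ b, F b < (Order.succ κ).ord := by
    intro b
    rw [lt_ord, Ordinal.card_add, Ordinal.card_one]
    calc (ty (g b)).card + 1 ≤ κ + 1 := add_le_add (hty b) le_rfl
      _ = κ := add_one_eq hκ
      _ < Order.succ κ := Order.lt_succ κ
  have hsup : iSup F < (Order.succ κ).ord :=
    Ordinal.iSup_lt_ord
      (by rw [(isRegular_succ hκ).cof_eq]; exact hβ.trans_lt (Order.lt_succ κ)) hFlt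
  have hlt : iSup F < @type (I κ) (· < ·) isWellOrder_lt := by rwa [type_toType]
  refine ⟨@enum (I κ) (· < ·) isWellOrder_lt ⟨iSup F, hlt⟩, fun b => ?_⟩
  have h2 : ty (g b) < ty (@enum (I κ) (· < ·) isWellOrder_lt ⟨iSup F, hlt⟩) := by
    show ty (g b) < @typein (I κ) (· < ·) isWellOrder_lt _
    rw [typein_enum]
    refine lt_of_lt_of_le ?_ (Ordinal.le_iSup F b)
    show ty (g b) < ty (g b) + 1
    rw [Ordinal.add_one_eq_succ]
    exact Order.lt_succ _
  exact (@typein_lt_typein (I κ) (· < ·) isWellOrder_lt _ _).1 h2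

open scoped Classical in
/-- a partial inverse to an embedding into `K κ` -/
def pinv {β : Type u} (m : β ↪ K κ) : K κ → Option β := fun k =>
  if h : ∃ b, m b = k then some h.choose else none

theorem pinv_emb {β : Type u} (m : β ↪ K κ) (b : β) : pinv κ m (m b) = some b := by
  rw [pinv, dif_pos ⟨b, rfl⟩]
  exact congrArg some (m.injective (⟨b, rfl⟩ : ∃ b', m b' = m b).choose_spec)

/-- the type of `x` over the points `v` -/
def pt (x : X) (c₀ : C) {i : I κ} (v : ↥(Iio i) → X)
    (m : ↥(Iio i) ↪ K κ) : T κ X C :=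
  ⟨fun k => (pinv κ m k).map v,
   fun k => ((pinv κ m k).map v).elim c₀ fun b => f {b, x}⟩

/-- the κ⁺-sequence of points in the hull mimicking `x` -/
def seq [Nonempty X] (x : X) (c₀ : C) (emb : ∀ i : I κ, ↥(Iio i) ↪ K κ) :
    I κ → X :=
  WellFoundedLT.fix fun i ih => rr f κ (pt f κ x c₀ (fun j : ↥(Iio i) => ih j j.2) (emb i))

theorem seq_eq [Nonempty X] (x : X) (c₀ : C) (emb : ∀ i : I κ, ↥(Iio i) ↪ K κ)
    (i : I κ) :
    seq f κ x c₀ emb i =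
      rr f κ (pt f κ x c₀ (fun j : ↥(Iio i) => seq f κ x c₀ emb j) (emb i)) :=
  WellFoundedLT.fix_eq _ i

theorem seq_mem_A [Nonempty X] (hκ : ℵ₀ ≤ κ) (x : X) (c₀ : C)
    (emb : ∀ i : I κ, ↥(Iio i) ↪ K κ) :
    ∀ i, seq f κ x c₀ emb i ∈ A f κ := by
  intro i
  induction i using WellFoundedLT.induction with
  | _ i IH =>
    rw [seq_eq]
    have hmem : ∀ j : ↥(Iio i), ∃ i', seq f κ x c₀ emb j ∈ H f κ i' :=
      fun j => Set.mem_iUnion.1 (IH j j.2)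
    choose gidx hgidx using hmem
    obtain ⟨i', hi'⟩ := exists_bound κ hκ (card_Iio κ i) gidx
    have hpQ : pt f κ x c₀ (fun j : ↥(Iio i) => seq f κ x c₀ emb j) (emb i)
        ∈ Q κ (⋃ j : ↥(Iio i'), H f κ j) := by
      intro k b hb
      obtain ⟨j, hj, rfl⟩ := Option.map_eq_some_iff.1 hb
      exact Set.mem_iUnion.2 ⟨⟨gidx j, hi' j⟩, hgidx j⟩
    have hmem' : rr f κ (pt f κ x c₀ (fun j : ↥(Iio i) => seq f κ x c₀ emb j)
        (emb i)) ∈ H f κ i' := by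
      rw [H_eq]
      exact Set.mem_union_right _ (Set.mem_image_of_mem _ hpQ)
    exact Set.mem_iUnion.2 ⟨i', hmem'⟩

theorem seq_realized [Nonempty X] (hκ : ℵ₀ ≤ κ) {x : X} (hx : x ∉ A f κ) (c₀ : C)
    (emb : ∀ i : I κ, ↥(Iio i) ↪ K κ) (i : I κ) :
    Realized f (pt f κ x c₀ (fun j : ↥(Iio i) => seq f κ x c₀ emb j) (emb i))
      (seq f κ x c₀ emb i) := by
  have hxreal : Realized f
      (pt f κ x c₀ (fun j : ↥(Iio i) => seq f κ x c₀ emb j) (emb i)) x := by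
    intro k b hb
    obtain ⟨j, hj, rfl⟩ := Option.map_eq_some_iff.1 hb
    refine ⟨fun hxb => hx (hxb ▸ seq_mem_A f κ hκ x c₀ emb j), ?_⟩
    simp only [pt, hj, Option.map_some, Option.elim_some]
  rw [seq_eq]
  exact rr_realized f κ ⟨x, hxreal⟩

end

end Stmt10Aux

open Stmt10Aux in
theorem stmt_10_aux {κ : Cardinal.{u}} (hκ : ℵ₀ ≤ κ)
    {X C : Type u} [DecidableEq X] (hX : Order.succ (2 ^ κ) ≤ #X) (hC : #C ≤ κ)
    (f : Finset X → C) :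
    ∃ z₁ z₂ z₃ : X, z₁ ≠ z₂ ∧ z₂ ≠ z₃ ∧ z₁ ≠ z₃ ∧
      f {z₁, z₂} = f {z₂, z₃} ∧ f {z₂, z₃} = f {z₁, z₃} := by
  have h2κ : ℵ₀ ≤ 2 ^ κ := aleph0_le_two_power κ hκ
  have hXpos : (0 : Cardinal) < #X :=
    ((Cardinal.zero_le _).trans_lt (Order.lt_succ _)).trans_le hX
  haveI hXne : Nonempty X := Cardinal.mk_ne_zero_iff.1 hXpos.ne'
  have hxex : ∃ x, x ∉ A f κ := by
    by_contra h
    push_neg at h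
    have hA : A f κ = Set.univ := Set.eq_univ_of_forall h
    have : #X ≤ 2 ^ κ := by
      calc #X = #(A f κ) := by rw [hA, Cardinal.mk_univ]
        _ ≤ 2 ^ κ := card_A f κ hκ hC
    exact ((Order.lt_succ (2 ^ κ)).trans_le hX).not_ge this
  obtain ⟨x, hx⟩ := hxex
  have hembex : ∀ i : I κ, Nonempty (↥(Iio i) ↪ K κ) := fun i =>
    Cardinal.le_def _ _ |>.1 ((card_Iio κ i).trans_eq (card_K κ).symm)
  let emb : ∀ i : I κ, ↥(Iio i) ↪ K κ := fun i => (hembex i).some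
  let c₀ : C := f ∅
  let a : I κ → X := seq f κ x c₀ emb
  have hmemA : ∀ i, a i ∈ A f κ := seq_mem_A f κ hκ x c₀ emb
  have hreal : ∀ i, Realized f
      (pt f κ x c₀ (fun j : ↥(Iio i) => a j) (emb i)) (a i) :=
    seq_realized f κ hκ hx c₀ emb
  have hkey : ∀ i j, i < j → a j ≠ a i ∧ f {a i, a j} = f {a i, x} := by
    intro i j hij
    have h1 : (pt f κ x c₀ (fun j' : ↥(Iio j) => a j') (emb j)).1
        (emb j ⟨i, hij⟩) = some (a i) := by
      simp only [pt, pinv_emb, Option.map_some]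
    have h2 : (pt f κ x c₀ (fun j' : ↥(Iio j) => a j') (emb j)).2
        (emb j ⟨i, hij⟩) = f {a i, x} := by
      simp only [pt, pinv_emb, Option.map_some, Option.elim_some]
    obtain ⟨hne, hcol⟩ := hreal j (emb j ⟨i, hij⟩) (a i) h1
    exact ⟨hne, hcol.trans h2⟩
  have hninj : ¬ Function.Injective (fun i : I κ => f {a i, x}) := by
    intro hinj
    have h1 : #(I κ) ≤ #C := Cardinal.mk_le_of_injective hinj
    rw [card_I] at h1
    exact (Order.lt_succ κ).not_ge (h1.trans hC)
  rw [Function.not_injective_iff] at hninj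
  obtain ⟨i, j, hcij, hij⟩ := hninj
  rcases hij.lt_or_gt with h | h
  · obtain ⟨hne, hcol⟩ := hkey i j h
    exact ⟨a i, a j, x, hne.symm,
      fun he => hx (he ▸ hmemA j), fun he => hx (he ▸ hmemA i),
      hcol.trans hcij, hcij.symm⟩
  · obtain ⟨hne, hcol⟩ := hkey j i h
    exact ⟨a j, a i, x, hne.symm,
      fun he => hx (he ▸ hmemA i), fun he => hx (he ▸ hmemA j),
      hcol.trans hcij.symm, hcij⟩


/-- Let `κ` be an infinite cardinal. If `X` has cardinality at least
`(2^κ)⁺`, `C` has cardinality at most `κ`, and `f` colours the 2-element subsets of `X`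
by colours in `C`, then there are three distinct points `z₁, z₂, z₃ ∈ X` forming a
monochromatic triangle: `f {z₁,z₂} = f {z₂,z₃} = f {z₁,z₃}`. -/
theorem stmt_10 {κ : Cardinal.{u}} (hκ : ℵ₀ ≤ κ)
    {X C : Type u} [DecidableEq X] (hX : Order.succ (2 ^ κ) ≤ #X) (hC : #C ≤ κ)
    (f : Finset X → C) :
    ∃ z₁ z₂ z₃ : X, z₁ ≠ z₂ ∧ z₂ ≠ z₃ ∧ z₁ ≠ z₃ ∧
      f {z₁, z₂} = f {z₂, z₃} ∧ f {z₂, z₃} = f {z₁, z₃} :=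
  stmt_10_aux hκ hX hC f
end
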